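/- Let l ≥ 3, k₁,…,k_l ∈ ℝ, and H ∈ ℝ^{N×N} symmetric with eigenvalues λ₁,…,λ_N. Define the lN×lN block matrix F₃ with identity blocks I_N on the superdiagonal, last block row (−k₁H, −k₂I, …, −k_lI), and zeros elsewhere. Then the characteristic polynomial of F₃ equals ∏_{i=1}^{N} ( s^l + k₁λ_i + ∑_{z=2}^{l} k_z s^{z−1} ). -/

import Mathlib

open Matrix Polynomial

variable {R : Type*} [CommRing R]

/-- companion-style charmatrix -/
noncomputable def compM (n : ℕ) (a : Fin n → R) : Matrix (Fin n) (Fin n) R[X] :=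
  Matrix.of fun i j =>
    (if i = j then (X : R[X]) else 0) + (if (i : ℕ) = n - 1 then C (a j) else 0)
      - (if (j : ℕ) = (i : ℕ) + 1 then 1 else 0)

lemma compM_det (n : ℕ) (a : Fin n → R) :
    (compM n a).det = X ^ n + ∑ j : Fin n, C (a j) * X ^ (j : ℕ) := by
  induction n with
  | zero => simp [compM, Matrix.det_fin_zero]
  | succ n ih =>
    rcases Nat.eq_zero_or_pos n with hn | hn
    · subst hn
      have h1 : compM 1 a = !![X + C (a 0)] := by
        ext i j
        fin_cases i; fin_cases j
        simp [compM]
      rw [h1, det_fin_one]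
      simp
    · obtain ⟨m, rfl⟩ : ∃ m, n = m + 1 := ⟨n - 1, (Nat.succ_pred_eq_of_pos hn).symm⟩
      rw [det_succ_column_zero, Fin.sum_univ_succ]
      have e0 : compM (m+2) a 0 0 = X := by simp [compM]
      have esub : (compM (m+2) a).submatrix (Fin.succAbove 0) Fin.succ
          = compM (m+1) (fun j => a j.succ) := by
        ext i j
        simp only [compM, submatrix_apply, Fin.succAbove_zero, of_apply, Fin.succ_inj,
          Fin.val_succ, show ∀ x : ℕ, (x + 1 = m + 2 - 1) ↔ (x = m) from fun x => by omega,
          show (m + 1 - 1 : ℕ) = m from rfl, add_left_inj]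
      have hdet : ((compM (m+2) a).submatrix (Fin.succAbove (Fin.last (m+1))) Fin.succ).det
          = (-1 : R[X]) ^ (m+1) := by
        have htri : ((compM (m+2) a).submatrix
            (Fin.succAbove (Fin.last (m+1))) Fin.succ).BlockTriangular OrderDual.toDual := by
          intro r c hrc
          have hb : (r : ℕ) < (c : ℕ) := hrc
          have hr := r.isLt
          simp only [submatrix_apply, Fin.succAbove_last, compM, of_apply, Fin.ext_iff,
            Fin.coe_castSucc, Fin.val_succ]
          split_ifs <;> first | omega | simp
        rw [det_of_lowerTriangular _ htri]
        have hdiag : ∀ r : Fin (m+1),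
            (compM (m+2) a).submatrix (Fin.succAbove (Fin.last (m+1))) Fin.succ r r = -1 := by
          intro r
          have hr := r.isLt
          simp only [submatrix_apply, Fin.succAbove_last, compM, of_apply, Fin.ext_iff,
            Fin.coe_castSucc, Fin.val_succ]
          split_ifs <;> first | omega | simp
        rw [Finset.prod_congr rfl fun r _ => hdiag r]
        simp
      have hlast : ∀ i : Fin (m+1),
          (-1:R[X]) ^ ((i.succ : Fin (m+2)) : ℕ) * compM (m+2) a i.succ 0 *
            ((compM (m+2) a).submatrix (Fin.succAbove i.succ) Fin.succ).det
          = if i = Fin.last m then C (a 0) else 0 := by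
        intro i
        by_cases hi : i = Fin.last m
        · subst hi
          rw [if_pos rfl]
          have hss : (Fin.last m).succ = Fin.last (m+1) := rfl
          rw [hss]
          have hv : compM (m+2) a (Fin.last (m+1)) 0 = C (a 0) := by
            simp [compM, Fin.ext_iff]
          rw [hv, hdet]
          rw [show ((Fin.last (m+1) : Fin (m+2)) : ℕ) = m + 1 from rfl]
          rw [show ((-1:R[X])^(m+1) * C (a 0) * (-1)^(m+1))
              = C (a 0) * ((-1)^(m+1) * (-1)^(m+1)) from by ring,
            ← pow_add, Even.neg_one_pow ⟨m+1, rfl⟩, mul_one]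
        · rw [if_neg hi]
          have hv : compM (m+2) a i.succ 0 = 0 := by
            have h2 : (i : ℕ) ≠ m := by simpa [Fin.ext_iff] using hi
            simp [compM, Fin.succ_ne_zero, Fin.val_succ, h2,
              show ∀ x : ℕ, (x + 1 = m + 2 - 1) ↔ x = m from fun x => by omega]
          rw [hv]
          ring
      rw [Finset.sum_congr rfl (fun i _ => hlast i),
        Finset.sum_ite_eq' Finset.univ (Fin.last m) (fun _ => C (a 0))]
      rw [e0, esub, ih]
      simp only [Finset.mem_univ, if_pos, Fin.val_zero, pow_zero, one_mul]
      rw [Fin.sum_univ_succ (f := fun j : Fin (m+2) => C (a j) * X ^ (j : ℕ))]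
      simp only [Fin.val_zero, pow_zero, mul_one, Fin.val_succ]
      have hsum : ∀ j : Fin (m+1),
          X * (C (a j.succ) * X ^ (j:ℕ)) = C (a j.succ) * X ^ ((j:ℕ)+1) := by
        intro j; rw [pow_succ]; ring
      rw [mul_add, Finset.mul_sum, Finset.sum_congr rfl fun j _ => hsum j]
      ring



lemma comp_charpoly (n : ℕ) (a : Fin n → R) :
    (Matrix.of fun i j : Fin n =>
      if (i : ℕ) = n - 1 then -(a j) else if (j : ℕ) = (i : ℕ) + 1 then (1:R) else 0).charpoly
    = X ^ n + ∑ j : Fin n, C (a j) * X ^ (j : ℕ) := by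
  rw [Matrix.charpoly, show charmatrix (Matrix.of fun i j : Fin n =>
      if (i : ℕ) = n - 1 then -(a j) else if (j : ℕ) = (i : ℕ) + 1 then (1:R) else 0)
      = compM n a from ?_, compM_det]
  ext i j
  rw [charmatrix_apply]
  simp only [compM, of_apply, diagonal_apply]
  have hj := j.isLt
  have hi := i.isLt
  by_cases h1 : (i : ℕ) = n - 1
  · have h2 : ¬ ((j : ℕ) = (i : ℕ) + 1) := by omega
    have h2' : ¬ ((j : ℕ) = n - 1 + 1) := by omega
    simp [h1, h2, h2', map_neg]
  · simp only [if_neg h1, if_pos, if_neg]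
    split_ifs <;> simp [h1]

lemma charpoly_similar {n : Type*} [Fintype n] [DecidableEq n] (P Q M : Matrix n n R)
    (h1 : P * Q = 1) (h2 : Q * P = 1) : (P * M * Q).charpoly = M.charpoly := by
  unfold Matrix.charpoly
  have hc : charmatrix (P * M * Q)
      = (C : R →+* R[X]).mapMatrix P * charmatrix M * (C : R →+* R[X]).mapMatrix Q := by
    unfold charmatrix
    set Pc := (C : R →+* R[X]).mapMatrix P
    set Qc := (C : R →+* R[X]).mapMatrix Q
    have hPQ : Pc * Qc = 1 := by
      rw [← _root_.map_mul C.mapMatrix P Q, h1, _root_.map_one]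
    rw [mul_sub, sub_mul]
    congr 1
    · rw [show Pc * Matrix.scalar n (X : R[X]) = Matrix.scalar n (X : R[X]) * Pc from
        (Matrix.scalar_commute (X : R[X]) (fun r => Commute.all _ _) Pc).symm]
      rw [mul_assoc, hPQ, mul_one]
    · simp [Pc, Qc, _root_.map_mul]
  rw [hc, det_mul, det_mul, mul_comm, ← mul_assoc, ← det_mul]
  have hPQ : (C : R →+* R[X]).mapMatrix Q * (C : R →+* R[X]).mapMatrix P = 1 := by
    rw [← _root_.map_mul C.mapMatrix Q P, h2, _root_.map_one]
  rw [hPQ, det_one, one_mul]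

lemma charmatrix_blockDiagonal {o m : Type*} [Fintype o] [DecidableEq o] [Fintype m]
    [DecidableEq m] (M : o → Matrix m m R) :
    charmatrix (blockDiagonal M) = blockDiagonal fun i => charmatrix (M i) := by
  ext ⟨i, a⟩ ⟨j, b⟩
  by_cases hab : a = b <;> by_cases hij : i = j <;>
    simp [charmatrix_apply, blockDiagonal_apply, diagonal_apply, Prod.ext_iff, hab, hij]

open Kronecker

/-- characteristic polynomial of the closed-loop tracking error matrix F₃. -/
theorem stmt13 {N l : ℕ} (hl : 3 ≤ l) (k : ℕ → ℝ)
    (H : Matrix (Fin N) (Fin N) ℝ) (hH : H.IsHermitian)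
    (F3 : Matrix (Fin l × Fin N) (Fin l × Fin N) ℝ)
    (hF3 : F3 = Matrix.of fun p q =>
      if p.1.val = l - 1 then
        (if q.1.val = 0 then -(k 1) * H p.2 q.2
         else -(k (q.1.val + 1)) * (if p.2 = q.2 then (1 : ℝ) else 0))
      else if q.1.val = p.1.val + 1 then (if p.2 = q.2 then (1 : ℝ) else 0)
      else 0) :
    F3.charpoly = ∏ i : Fin N,
      (X ^ l + C (k 1 * hH.eigenvalues i)
        + ∑ z ∈ Finset.Icc 2 l, C (k z) * X ^ (z - 1)) := by
  classical
  set U : Matrix (Fin N) (Fin N) ℝ := (hH.eigenvectorUnitary : Matrix (Fin N) (Fin N) ℝ) with hU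
  set lam : Fin N → ℝ := hH.eigenvalues with hlam
  set A : Matrix (Fin l) (Fin l) ℝ := Matrix.of (fun i j =>
    if (i : ℕ) = l - 1 then (if (j : ℕ) = 0 then 0 else -k ((j : ℕ) + 1))
    else if (j : ℕ) = (i : ℕ) + 1 then 1 else 0) with hA
  set B : Matrix (Fin l) (Fin l) ℝ := Matrix.of (fun i j =>
    if (i : ℕ) = l - 1 ∧ (j : ℕ) = 0 then -k 1 else 0) with hB
  have hUU : U * star U = 1 := mem_unitaryGroup_iff.mp (hH.eigenvectorUnitary).2
  have hUU' : star U * U = 1 := mem_unitaryGroup_iff'.mp (hH.eigenvectorUnitary).2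
  have hspec : H = U * diagonal lam * star U := by
    have h := hH.spectral_theorem
    rw [RCLike.ofReal_real_eq_id] at h
    simpa using h
  have hF : F3 = A ⊗ₖ (1 : Matrix (Fin N) (Fin N) ℝ) + B ⊗ₖ H := by
    rw [hF3]
    ext ⟨p1, p2⟩ ⟨q1, q2⟩
    simp only [of_apply, Matrix.add_apply, kroneckerMap_apply, one_apply, hA, hB]
    by_cases h1 : (p1 : ℕ) = l - 1
    · by_cases h2 : (q1 : ℕ) = 0
      · simp only [if_pos h1, if_pos h2, if_pos (⟨h1, h2⟩ : (p1:ℕ) = l - 1 ∧ (q1:ℕ) = 0)]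
        by_cases h : p2 = q2 <;> simp [h] <;> ring
      · simp only [if_pos h1, if_neg h2,
          if_neg (fun hc : (p1:ℕ) = l - 1 ∧ (q1:ℕ) = 0 => h2 hc.2)]
        by_cases h : p2 = q2 <;> simp [h, h1, h2]
    · simp only [if_neg h1, if_neg (fun hc : (p1:ℕ) = l - 1 ∧ (q1:ℕ) = 0 => h1 hc.1)]
      by_cases h3 : (q1 : ℕ) = (p1 : ℕ) + 1 <;>
        by_cases h : p2 = q2 <;> simp [h1, h3, h]
  have hG : A ⊗ₖ (1 : Matrix (Fin N) (Fin N) ℝ) + B ⊗ₖ diagonal lam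
      = blockDiagonal (fun i : Fin N => A + lam i • B) := by
    ext ⟨p1, p2⟩ ⟨q1, q2⟩
    simp only [Matrix.add_apply, kroneckerMap_apply, one_apply, blockDiagonal_apply,
      diagonal_apply, Matrix.smul_apply, smul_eq_mul]
    by_cases h : p2 = q2 <;> simp [h] <;> ring
  have hconj : F3 = ((1 : Matrix (Fin l) (Fin l) ℝ) ⊗ₖ U)
      * (A ⊗ₖ (1 : Matrix (Fin N) (Fin N) ℝ) + B ⊗ₖ diagonal lam)
      * ((1 : Matrix (Fin l) (Fin l) ℝ) ⊗ₖ star U) := by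
    rw [hF, mul_add, add_mul, ← mul_kronecker_mul, ← mul_kronecker_mul, ← mul_kronecker_mul,
      ← mul_kronecker_mul]
    simp only [Matrix.one_mul, Matrix.mul_one]
    rw [hUU, ← hspec]
  have hchar : F3.charpoly = (blockDiagonal (fun i : Fin N => A + lam i • B)).charpoly := by
    rw [hconj, hG]
    apply charpoly_similar
    · rw [← mul_kronecker_mul, Matrix.one_mul, hUU, one_kronecker_one]
    · rw [← mul_kronecker_mul, Matrix.one_mul, hUU', one_kronecker_one]
  rw [hchar, Matrix.charpoly, charmatrix_blockDiagonal, det_blockDiagonal]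
  apply Finset.prod_congr rfl
  intro i _
  have hcomp : A + lam i • B = Matrix.of (fun r j : Fin l =>
      if (r : ℕ) = l - 1 then
        -((fun j : Fin l => if (j : ℕ) = 0 then k 1 * lam i else k ((j : ℕ) + 1)) j)
      else if (j : ℕ) = (r : ℕ) + 1 then (1 : ℝ) else 0) := by
    ext r j
    simp only [Matrix.add_apply, Matrix.smul_apply, smul_eq_mul, of_apply, hA, hB]
    by_cases h1 : (r : ℕ) = l - 1
    · by_cases h2 : (j : ℕ) = 0 <;> simp [h1, h2] <;> ring
    · simp [h1]
  rw [show (charmatrix (A + lam i • B)).det = (A + lam i • B).charpoly from rfl, hcomp,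
    comp_charpoly]
  have hsum : ∑ j : Fin l,
      C (if (j : ℕ) = 0 then k 1 * lam i else k ((j : ℕ) + 1)) * X ^ (j : ℕ)
      = C (k 1 * lam i) + ∑ z ∈ Finset.Icc 2 l, C (k z) * X ^ (z - 1) := by
    rw [Fin.sum_univ_eq_sum_range
      (fun j : ℕ => C (if j = 0 then k 1 * lam i else k (j + 1)) * X ^ j) l]
    rw [Finset.range_eq_Ico, Finset.sum_eq_sum_Ico_succ_bot (by omega : 0 < l)]
    simp only [if_pos rfl, pow_zero, mul_one]
    congr 1
    refine Finset.sum_bij' (fun j _ => j + 1) (fun z _ => z - 1) ?_ ?_ ?_ ?_ ?_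
    · intro a ha
      simp only [Finset.mem_Ico] at ha
      simp only [Finset.mem_Icc]
      omega
    · intro a ha
      simp only [Finset.mem_Icc] at ha
      simp only [Finset.mem_Ico]
      omega
    · intro a ha
      simp only [Finset.mem_Ico] at ha
      omega
    · intro a ha
      simp only [Finset.mem_Icc] at ha
      omega
    · intro a ha
      simp only [Finset.mem_Ico] at ha
      rw [if_neg (by omega), Nat.add_sub_cancel]
  rw [hsum]
  ring
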